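/- Let M ≥ 2 be an integer and let X ~ P_X and Y₁, …, Y_M be independent with each Y_i ~ Q_Y. Then the expected distortion of the random code satisfies E[min_{1≤i≤M} d(X,Y_i)] = ∫₀¹ D̃(w,Q_Y) · M(M−1) w (1−w)^{M−2} dw. -/

import Mathlib

open MeasureTheory

/-- The pairwise correct probability `p_c(x,y,u)` with respect to the pmf `Q` on `Y`:
`p_c(x,y,u) = Q{y' : d(x,y') < d(x,y)} + u * Q{y' : d(x,y') = d(x,y)}`. -/
noncomputable def pc {X Y : Type*} [Fintype Y] (Q : Y → ℝ) (d : X → Y → ℝ)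
    (x : X) (y : Y) (u : ℝ) : ℝ :=
  (∑ y' : Y, if d x y' < d x y then Q y' else 0)
    + u * (∑ y' : Y, if d x y' = d x y then Q y' else 0)

/-- The functional `D̃(w,Q) = w⁻¹ ⬝ E_{P ⊗ Q ⊗ Unif[0,1]}[ d(X,Y) ⬝ 1{p_c(X,Y,U) ≤ w} ]`. -/
noncomputable def Dtilde {X Y : Type*} [Fintype X] [Fintype Y]
    (P : X → ℝ) (Q : Y → ℝ) (d : X → Y → ℝ) (w : ℝ) : ℝ :=
  w⁻¹ * ∑ x : X, ∑ y : Y, P x * Q y * d x y *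
    (∫ u in Set.Icc (0:ℝ) 1, if pc Q d x y u ≤ w then (1:ℝ) else 0)

/-!
Fix `x` and write `a = d x`. The minimum of `M` independent `Q`-draws of `a` equals `v` with
probability `Q{a ≥ v}^M - Q{a > v}^M`. On the other side fix `y`, and let `L = Q{a < a y}`,
`E = Q{a = a y}`, so that `p_c = L + u E`. By Fubini and
`∫_p^1 M(M-1)(1-w)^(M-2) dw = M(1-p)^(M-1)`, the `w`-integral becomes
`M ∫_0^1 (1 - L - u E)^(M-1) du = ((1-L)^M - (1-L-E)^M) / E`. Summing `Q y` over the fibre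
`{a = v}` cancels the `1 / E`, and `1 - L = Q{a ≥ v}`, `1 - L - E = Q{a > v}`. The factor `w`
of the weight cancels the `w⁻¹` of `D̃` off the null set `{0}`.
-/

open Set Finset

section
variable {Y : Type*} [Fintype Y]

lemma sum_ite_forall_prod_eq_pow {R : Type*} [CommSemiring R] (Q : Y → R) (p : Y → Prop)
    [DecidablePred p] (M : ℕ) :
    ∑ f : Fin M → Y, (if ∀ i, p (f i) then ∏ i, Q (f i) else 0)
      = (∑ y, if p y then Q y else 0) ^ M := by
  rw [Fintype.sum_pow]
  exact sum_congr rfl fun f _ => by rw [Fintype.prod_ite_zero]; congr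

lemma inf'_univ_eq_sum_mul_ite {ι : Type*} [Fintype ι] (H : (univ : Finset ι).Nonempty)
    (g : ι → ℝ) {T : Finset ℝ} (hT : ∀ i, g i ∈ T) :
    univ.inf' H g
      = ∑ v ∈ T, v *
          ((if ∀ i, v ≤ g i then 1 else 0) - (if ∀ i, v < g i then 1 else 0)) := by
  have hsub : ∀ v, (if ∀ i, v ≤ g i then (1:ℝ) else 0) - (if ∀ i, v < g i then 1 else 0)
      = if univ.inf' H g = v then 1 else 0 := by
    intro v
    have hle : (∀ i, v ≤ g i) ↔ v ≤ univ.inf' H g := by simp [le_inf'_iff]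
    have hlt : (∀ i, v < g i) ↔ v < univ.inf' H g := by simp [lt_inf'_iff]
    rcases lt_trichotomy (univ.inf' H g) v with h | h | h
    · simp [hle, hlt, h.not_ge, h.ne, h.not_gt]
    · simp [hle, hlt, h]
    · simp [hle, hlt, h.le, h, h.ne']
  obtain ⟨i, -, hi⟩ := exists_mem_eq_inf' H g
  simp_rw [hsub, mul_ite, mul_one, mul_zero]
  rw [sum_ite_eq, if_pos (hi ▸ hT i)]

lemma sum_prod_mul_inf'_eq_sum_mul_pow_sub_pow (Q a : Y → ℝ) {M : ℕ}
    (H : (univ : Finset (Fin M)).Nonempty) :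
    ∑ f : Fin M → Y, (∏ i, Q (f i)) * univ.inf' H (fun i => a (f i))
      = ∑ v ∈ univ.image a, v * ((∑ y, if v ≤ a y then Q y else 0) ^ M
          - (∑ y, if v < a y then Q y else 0) ^ M) := by
  rw [sum_congr rfl fun f _ => by
    rw [inf'_univ_eq_sum_mul_ite H _ fun i => mem_image_of_mem a (mem_univ (f i))]]
  simp_rw [mul_sum]
  rw [sum_comm]
  refine sum_congr rfl fun v _ => ?_
  rw [← sum_ite_forall_prod_eq_pow, ← sum_ite_forall_prod_eq_pow, ← sum_sub_distrib, mul_sum]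
  refine sum_congr rfl fun f _ => ?_
  split_ifs <;> ring

lemma sum_mul_comp_eq_sum_image {β : Type*} [DecidableEq β] (Q : Y → ℝ) (a : Y → β)
    (φ : β → ℝ) :
    ∑ y, Q y * φ (a y) = ∑ v ∈ univ.image a, (∑ y, if a y = v then Q y else 0) * φ v := by
  rw [← sum_fiberwise_of_maps_to fun y _ => mem_image_of_mem a (mem_univ y)]
  refine sum_congr rfl fun v _ => ?_
  rw [← sum_filter, sum_mul]
  exact sum_congr rfl fun y hy => by rw [(mem_filter.1 hy).2]

variable {Q : Y → ℝ}

lemma sum_ite_le_eq_one_sub (hQ1 : ∑ y, Q y = 1) (a : Y → ℝ) (v : ℝ) :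
    ∑ y, (if v ≤ a y then Q y else 0) = 1 - ∑ y, (if a y < v then Q y else 0) := by
  rw [← hQ1, ← sum_sub_distrib]
  refine sum_congr rfl fun y _ => ?_
  by_cases h : a y < v
  · simp [h, h.not_ge]
  · simp [h, not_lt.1 h]

lemma sum_ite_lt_eq_one_sub_sub (hQ1 : ∑ y, Q y = 1) (a : Y → ℝ) (v : ℝ) :
    ∑ y, (if v < a y then Q y else 0)
      = 1 - ∑ y, (if a y < v then Q y else 0) - ∑ y, (if a y = v then Q y else 0) := by
  rw [← hQ1, ← sum_sub_distrib, ← sum_sub_distrib]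
  refine sum_congr rfl fun y _ => ?_
  rcases lt_trichotomy (a y) v with h | h | h
  · simp [h, h.ne, h.not_gt]
  · simp [h]
  · simp [h, h.ne', h.not_gt]

end

lemma integral_Icc_ite_le_mul_pow (k : ℕ) {p : ℝ} (hp0 : 0 ≤ p) (hp1 : p ≤ 1) :
    ∫ w in Icc (0:ℝ) 1, (if p ≤ w then (1:ℝ) else 0) * ((k + 1) * (1 - w) ^ k)
      = (1 - p) ^ (k + 1) := by
  calc _ = ∫ w in Icc (0:ℝ) 1, (Ici p).indicator (fun w => (k + 1) * (1 - w) ^ k) w := by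
          congr 1; ext w; simp [indicator_apply, ite_mul]
    _ = ∫ w in p..1, (k + 1) * (1 - w) ^ k := by
          have hset : Icc (0:ℝ) 1 ∩ Ici p = Icc p 1 := by
            ext w
            simp only [mem_inter_iff, Set.mem_Icc, Set.mem_Ici]
            exact ⟨fun h => ⟨h.2, h.1.2⟩, fun h => ⟨⟨hp0.trans h.1, h.2⟩, h.1⟩⟩
          rw [setIntegral_indicator measurableSet_Ici, hset, integral_Icc_eq_integral_Ioc,
            intervalIntegral.integral_of_le hp1]
    _ = (k + 1) * ∫ x in (0:ℝ)..1 - p, x ^ k := by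
          rw [intervalIntegral.integral_const_mul,
            intervalIntegral.integral_comp_sub_left (fun x => x ^ k), sub_self]
    _ = _ := by
          rw [integral_pow]; field_simp; simp

lemma mul_integral_Icc_pow_sub_mul (n : ℕ) (L E : ℝ) :
    E * ∫ u in Icc (0:ℝ) 1, (1 - L - u * E) ^ n
      = ((1 - L) ^ (n + 1) - (1 - L - E) ^ (n + 1)) / (n + 1) := by
  rcases eq_or_ne E 0 with rfl | hE
  · simp
  rw [integral_Icc_eq_integral_Ioc, ← intervalIntegral.integral_of_le zero_le_one]
  simp_rw [mul_comm _ E]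
  rw [intervalIntegral.integral_comp_sub_mul (fun x => x ^ n) hE, integral_pow, smul_eq_mul,
    mul_zero, sub_zero, mul_one, mul_inv_cancel_left₀ hE]

lemma integrable_prod_ite_le_mul {g : ℝ → ℝ} (hg : Continuous g) (L E : ℝ) :
    Integrable (fun p : ℝ × ℝ => (if L + p.2 * E ≤ p.1 then (1:ℝ) else 0) * g p.1)
      ((volume.restrict (Icc (0:ℝ) 1)).prod (volume.restrict (Icc (0:ℝ) 1))) := by
  refine Integrable.bdd_mul (c := 1) (hg.integrableOn_Icc.comp_fst _) ?_ ?_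
  · exact (Measurable.ite (measurableSet_le (by fun_prop) (by fun_prop)) measurable_const
      measurable_const).aestronglyMeasurable
  · exact Filter.Eventually.of_forall fun p => by split_ifs <;> simp

lemma integral_Icc_integral_ite_le_mul_swap {g : ℝ → ℝ} (hg : Continuous g) (L E : ℝ) :
    ∫ w in Icc (0:ℝ) 1, (∫ u in Icc (0:ℝ) 1, if L + u * E ≤ w then (1:ℝ) else 0) * g w
      = ∫ u in Icc (0:ℝ) 1, ∫ w in Icc (0:ℝ) 1,
          (if L + u * E ≤ w then (1:ℝ) else 0) * g w := by
  simp_rw [← integral_mul_const]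
  exact integral_integral_swap (integrable_prod_ite_le_mul hg L E)

lemma integrableOn_integral_ite_le_mul {g : ℝ → ℝ} (hg : Continuous g) (L E : ℝ) :
    IntegrableOn (fun w => (∫ u in Icc (0:ℝ) 1, if L + u * E ≤ w then (1:ℝ) else 0) * g w)
      (Icc 0 1) := by
  simp_rw [← integral_mul_const]
  exact (integrable_prod_ite_le_mul hg L E).integral_prod_left

-- Multiplied by `E` rather than divided, so that the degenerate case `E = 0` holds as well.
lemma mul_integral_Icc_integral_ite_le (k : ℕ) {L E : ℝ} (hL : 0 ≤ L) (hE : 0 ≤ E)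
    (hLE : L + E ≤ 1) :
    E * ∫ w in Icc (0:ℝ) 1, (∫ u in Icc (0:ℝ) 1, if L + u * E ≤ w then (1:ℝ) else 0) *
        ((k + 2) * (k + 1) * (1 - w) ^ k)
      = (1 - L) ^ (k + 2) - (1 - L - E) ^ (k + 2) := by
  have inner : ∀ u ∈ Icc (0:ℝ) 1,
      ∫ w in Icc (0:ℝ) 1,
          (if L + u * E ≤ w then (1:ℝ) else 0) * ((k + 2) * (k + 1) * (1 - w) ^ k)
        = (k + 2) * (1 - L - u * E) ^ (k + 1) := by
    rintro u ⟨hu0, hu1⟩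
    rw [show 1 - L - u * E = 1 - (L + u * E) by ring,
      ← integral_Icc_ite_le_mul_pow k (by positivity) (by nlinarith), ← integral_const_mul]
    congr 1; ext w; ring
  rw [integral_Icc_integral_ite_le_mul_swap (by fun_prop),
    setIntegral_congr_fun measurableSet_Icc inner, integral_const_mul, mul_left_comm,
    mul_integral_Icc_pow_sub_mul]
  push_cast
  field_simp
  ring

lemma sum_prod_mul_inf'_eq_sum_mul_integral_pc {X Y : Type*} [Fintype Y] {Q : Y → ℝ}
    (hQ0 : ∀ y, 0 ≤ Q y) (hQ1 : ∑ y, Q y = 1) (d : X → Y → ℝ) (x : X) (k : ℕ)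
    (H : (univ : Finset (Fin (k + 2))).Nonempty) :
    ∑ f : Fin (k + 2) → Y, (∏ i, Q (f i)) * univ.inf' H (fun i => d x (f i))
      = ∑ y, Q y * d x y * ∫ w in Icc (0:ℝ) 1,
          (∫ u in Icc (0:ℝ) 1, if pc Q d x y u ≤ w then (1:ℝ) else 0) *
            ((k + 2) * (k + 1) * (1 - w) ^ k) := by
  set a := d x
  set L : ℝ → ℝ := fun v => ∑ y, if a y < v then Q y else 0
  set E : ℝ → ℝ := fun v => ∑ y, if a y = v then Q y else 0
  have hL : ∀ v, 0 ≤ L v := fun v => sum_nonneg fun y _ => ite_nonneg (hQ0 y) le_rfl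
  have hE : ∀ v, 0 ≤ E v := fun v => sum_nonneg fun y _ => ite_nonneg (hQ0 y) le_rfl
  have hLE : ∀ v, L v + E v ≤ 1 := fun v => by
    have hgt := sum_ite_lt_eq_one_sub_sub hQ1 a v
    have hgt0 : 0 ≤ ∑ y, (if v < a y then Q y else 0) :=
      sum_nonneg fun y _ => ite_nonneg (hQ0 y) le_rfl
    linarith
  calc _ = ∑ v ∈ univ.image a, v * ((1 - L v) ^ (k + 2) - (1 - L v - E v) ^ (k + 2)) := by
        rw [sum_prod_mul_inf'_eq_sum_mul_pow_sub_pow]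
        simp_rw [sum_ite_le_eq_one_sub hQ1, sum_ite_lt_eq_one_sub_sub hQ1]
        rfl
    _ = ∑ v ∈ univ.image a, E v * (v * ∫ w in Icc (0:ℝ) 1,
          (∫ u in Icc (0:ℝ) 1, if L v + u * E v ≤ w then (1:ℝ) else 0) *
            ((k + 2) * (k + 1) * (1 - w) ^ k)) := by
        refine sum_congr rfl fun v _ => ?_
        rw [mul_left_comm, mul_integral_Icc_integral_ite_le k (hL v) (hE v) (hLE v)]
    _ = _ := by
        rw [← sum_mul_comp_eq_sum_image]
        exact sum_congr rfl fun y _ => by rw [mul_assoc]; rfl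

lemma Dtilde_mul_eq_sum {X Y : Type*} [Fintype X] [Fintype Y] (P : X → ℝ) (Q : Y → ℝ)
    (d : X → Y → ℝ) (c r : ℝ) {w : ℝ} (hw : w ≠ 0) :
    Dtilde P Q d w * (c * w * r) = ∑ x, ∑ y, P x * (Q y * d x y *
      ((∫ u in Icc (0:ℝ) 1, if pc Q d x y u ≤ w then (1:ℝ) else 0) * (c * r))) := by
  simp only [Dtilde, mul_sum, sum_mul]
  refine sum_congr rfl fun x _ => sum_congr rfl fun y _ => ?_
  field_simp

theorem random_coding_exact {X Y : Type*} [Fintype X] [Fintype Y]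
    (P : X → ℝ)
    (Q : Y → ℝ) (hQ0 : ∀ y, 0 ≤ Q y) (hQ1 : ∑ y : Y, Q y = 1)
    (d : X → Y → ℝ)
    (M : ℕ) (hM : 2 ≤ M) :
    ∑ x : X, P x * ∑ f : Fin M → Y, (∏ i : Fin M, Q (f i)) *
        ((Finset.univ : Finset (Fin M)).inf' ⟨⟨0, by omega⟩, Finset.mem_univ _⟩
          fun i => d x (f i))
    = ∫ w in Set.Icc (0:ℝ) 1,
        Dtilde P Q d w * ((M:ℝ) * ((M:ℝ) - 1) * w * (1 - w) ^ (M - 2)) := by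
  obtain ⟨k, rfl⟩ : ∃ k, M = k + 2 := ⟨M - 2, by omega⟩
  have hc : ((k + 2 : ℕ) : ℝ) * ((k + 2 : ℕ) - 1) = (k + 2) * (k + 1) := by push_cast; ring
  have hint : ∀ x y, IntegrableOn (fun w => P x * (Q y * d x y *
      ((∫ u in Icc (0:ℝ) 1, if pc Q d x y u ≤ w then (1:ℝ) else 0) *
        ((k + 2) * (k + 1) * (1 - w) ^ k)))) (Icc 0 1) := fun x y =>
    ((integrableOn_integral_ite_le_mul (by fun_prop) _ _).const_mul _).const_mul _
  calc _ = ∑ x, ∑ y, P x * (Q y * d x y * ∫ w in Icc (0:ℝ) 1,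
          (∫ u in Icc (0:ℝ) 1, if pc Q d x y u ≤ w then (1:ℝ) else 0) *
            ((k + 2) * (k + 1) * (1 - w) ^ k)) := sum_congr rfl fun x _ =>
        (congrArg (P x * ·) (sum_prod_mul_inf'_eq_sum_mul_integral_pc hQ0 hQ1 d x k _)).trans
          (mul_sum _ _ _)
    _ = ∫ w in Icc (0:ℝ) 1, ∑ x, ∑ y, P x * (Q y * d x y *
          ((∫ u in Icc (0:ℝ) 1, if pc Q d x y u ≤ w then (1:ℝ) else 0) *
            ((k + 2) * (k + 1) * (1 - w) ^ k))) := by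
        rw [integral_finsetSum _ fun x _ => integrable_finsetSum _ fun y _ => hint x y]
        refine sum_congr rfl fun x _ => ?_
        rw [integral_finsetSum _ fun y _ => hint x y]
        simp_rw [integral_const_mul]
    _ = _ := setIntegral_congr_ae measurableSet_Icc <| by
        filter_upwards [Measure.ae_ne volume 0] with w hw _
        rw [Dtilde_mul_eq_sum P Q d _ _ hw, hc, Nat.add_sub_cancel]
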